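/- arXiv:1007.2469 — 3 statements merged into one kernel-verified Lean document; each statement's English description precedes it below -/
import Mathlib

section
/- Under SJF, if a job j begins service at a time strictly between two consecutive frontier start times τ_k and τ_{k+1}, then its service requirement satisfies w_j < F(τ_k), where F is the frontier process. -/
/-- under SJF, a job started strictly between two consecutive
frontier start times τ_k < τ_{k+1} satisfies w_j < F(τ_k): the frontier F is
right-continuous, piecewise constant, and jumps only at frontier start times. -/
theorem stmt5 {ι : Type*} (w : ι → ℝ) (γ : ι → ℝ) (F : ℝ → ℝ) (T : Set ℝ)
    (τk τk1 : ℝ) (hτk : τk ∈ T) (hτk1 : τk1 ∈ T) (hlt : τk < τk1)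
    (hconsec : ∀ u ∈ T, ¬ (τk < u ∧ u < τk1))   -- consecutive frontier start times
    (hconst : ∀ s t, s ≤ t → (∀ u ∈ T, ¬ (s < u ∧ u ≤ t)) → F t = F s)
    (j : ι) (hstart : τk < γ j ∧ γ j < τk1)
    (hle : w j ≤ F (γ j))
    (hfrontier : w j = F (γ j) → γ j ∈ T) :
    w j < F τk := by
  have hF : F (γ j) = F τk := by
    apply hconst τk (γ j) hstart.1.le
    intro u hu ⟨h1, h2⟩
    exact hconsec u hu ⟨h1, lt_of_le_of_lt h2 hstart.2⟩
  rw [hF] at hle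
  rcases lt_or_eq_of_le hle with h | h
  · exact h
  · exact absurd (hfrontier (h.trans hF.symm)) (fun hm => hconsec _ hm hstart)
end

section
/- Let μ, ν be finite nonnegative Borel measures on [0,∞) with the same total mass restricted to [F,∞) in the sense that μ(A) = ν(A) for all Borel A ⊂ [F,∞), for some F ≥ 0. Suppose moreover that for some ε, δ > 0: μ([0,δ]) ≤ ε/2, ν([0,δ]) ≤ ε/2, and the first moments of both measures restricted to [0,F) are at most δε/2 (i.e., ∫_{[0,F)} x μ(dx) ≤ δε/2 and ∫_{[0,F)} x ν(dx) ≤ δε/2). Then the Prohorov distance between μ and ν is at most ε. -/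
/-!
Split a closed set `B` at `F`. Above `F` the two measures coincide, and `B` lies inside its
own `ε'`-thickening, so that part of `μ B` is bounded by `ν (thickening ε' B)`. Below `F` the
whole mass of `μ` is at most `ε`: it carries nothing on `(-∞, 0)`, at most `ε/2` on `[0, δ]`,
and by Markov's inequality at most `ε/2` on `(δ, F)`, since the first moment there is at most
`δ ε / 2`.
-/

open MeasureTheory Set

lemma measure_le_measure_compl_add_of_eq_on_subsets {α : Type*} [MeasurableSpace α]
    {μ ν : Measure α} {S B : Set α} (hS : MeasurableSet S) (hB : MeasurableSet B)
    (hagree : ∀ A, MeasurableSet A → A ⊆ S → μ A = ν A) :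
    μ B ≤ μ Sᶜ + ν B :=
  calc μ B = μ (B ∩ S) + μ (B \ S) := (measure_inter_add_sdiff B hS).symm
    _ ≤ ν B + μ Sᶜ := by
      rw [hagree _ (hB.inter hS) inter_subset_right]
      exact add_le_add (measure_mono inter_subset_left)
        (measure_mono fun _ hx => hx.2)
    _ = μ Sᶜ + ν B := add_comm _ _

lemma measure_Ioo_le_of_setLIntegral_Ico_le {μ : Measure ℝ} {δ F c : ℝ} (hδ : 0 < δ)
    (hmom : ∫⁻ x in Ico 0 F, ENNReal.ofReal x ∂μ ≤ ENNReal.ofReal (δ * c)) :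
    μ (Ioo δ F) ≤ ENNReal.ofReal c := by
  have hmarkov : ENNReal.ofReal δ * μ (Ioo δ F) ≤ ∫⁻ x in Ico 0 F, ENNReal.ofReal x ∂μ :=
    calc ENNReal.ofReal δ * μ (Ioo δ F) = ∫⁻ _ in Ioo δ F, ENNReal.ofReal δ ∂μ :=
          (setLIntegral_const _ _).symm
      _ ≤ ∫⁻ x in Ioo δ F, ENNReal.ofReal x ∂μ :=
          setLIntegral_mono' measurableSet_Ioo fun x hx => ENNReal.ofReal_le_ofReal hx.1.le
      _ ≤ ∫⁻ x in Ico 0 F, ENNReal.ofReal x ∂μ :=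
          lintegral_mono_set fun x hx => ⟨(hδ.trans hx.1).le, hx.2⟩
  rw [ENNReal.ofReal_mul hδ.le] at hmom
  exact (ENNReal.mul_le_mul_iff_right (by simpa using hδ) ENNReal.ofReal_ne_top).1
    (hmarkov.trans hmom)

lemma measure_Iio_le_of_setLIntegral_Ico_le {μ : Measure ℝ} {δ F a b : ℝ} (hδ : 0 < δ)
    (hsupp : μ (Iio 0) = 0) (hmass : μ (Icc 0 δ) ≤ ENNReal.ofReal a)
    (hmom : ∫⁻ x in Ico 0 F, ENNReal.ofReal x ∂μ ≤ ENNReal.ofReal (δ * b)) :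
    μ (Iio F) ≤ ENNReal.ofReal a + ENNReal.ofReal b := by
  have hcover : Iio F ⊆ Iio 0 ∪ Icc 0 δ ∪ Ioo δ F := by
    intro x hx
    rcases lt_or_ge x 0 with h0 | h0
    · exact Or.inl (Or.inl h0)
    rcases le_or_gt x δ with h1 | h1
    · exact Or.inl (Or.inr ⟨h0, h1⟩)
    · exact Or.inr ⟨h1, hx⟩
  calc μ (Iio F) ≤ μ (Iio 0) + μ (Icc 0 δ) + μ (Ioo δ F) :=
        (measure_mono hcover).trans <|
          (measure_union_le _ _).trans (add_le_add_left (measure_union_le _ _) _)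
    _ ≤ 0 + ENNReal.ofReal a + ENNReal.ofReal b := by
        gcongr
        · exact hsupp.le
        · exact measure_Ioo_le_of_setLIntegral_Ico_le hδ hmom
    _ = ENNReal.ofReal a + ENNReal.ofReal b := by rw [zero_add]

theorem stmt15_general (μ ν : Measure ℝ)
    (F δ ε : ℝ) (hδ : 0 < δ) (hε : 0 < ε)
    (hsuppμ : μ (Set.Iio 0) = 0) (hsuppν : ν (Set.Iio 0) = 0)
    (hagree : ∀ A : Set ℝ, MeasurableSet A → A ⊆ Set.Ici F → μ A = ν A)
    (hμδ : μ (Set.Icc 0 δ) ≤ ENNReal.ofReal (ε / 2))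
    (hνδ : ν (Set.Icc 0 δ) ≤ ENNReal.ofReal (ε / 2))
    (hμmom : (∫⁻ x in Set.Ico 0 F, ENNReal.ofReal x ∂μ)
      ≤ ENNReal.ofReal (δ * ε / 2))
    (hνmom : (∫⁻ x in Set.Ico 0 F, ENNReal.ofReal x ∂ν)
      ≤ ENNReal.ofReal (δ * ε / 2)) :
    ∀ ε' > ε, ∀ B : Set ℝ, IsClosed B →
      μ B ≤ ν (Metric.thickening ε' B) + ENNReal.ofReal ε' ∧
      ν B ≤ μ (Metric.thickening ε' B) + ENNReal.ofReal ε' := by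
  intro ε' hε' B hB
  have hhalves : ENNReal.ofReal (ε / 2) + ENNReal.ofReal (ε / 2) ≤ ENNReal.ofReal ε' := by
    rw [← ENNReal.ofReal_add (by positivity) (by positivity), add_halves]
    exact ENNReal.ofReal_le_ofReal hε'.le
  have hside : ∀ {ρ σ : Measure ℝ}, (∀ A, MeasurableSet A → A ⊆ Ici F → ρ A = σ A) →
      ρ (Iio F) ≤ ENNReal.ofReal ε' → ρ B ≤ σ (Metric.thickening ε' B) + ENNReal.ofReal ε' :=
    fun {ρ σ} hρσ hlow => calc
      ρ B ≤ ρ (Ici F)ᶜ + σ B :=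
        measure_le_measure_compl_add_of_eq_on_subsets measurableSet_Ici hB.measurableSet hρσ
      _ ≤ ENNReal.ofReal ε' + σ (Metric.thickening ε' B) := by
        rw [compl_Ici]
        exact add_le_add hlow (measure_mono (Metric.self_subset_thickening (hε.trans hε') B))
      _ = σ (Metric.thickening ε' B) + ENNReal.ofReal ε' := add_comm _ _
  rw [mul_div_assoc] at hμmom hνmom
  exact ⟨hside hagree ((measure_Iio_le_of_setLIntegral_Ico_le hδ hsuppμ hμδ hμmom).trans hhalves),
    hside (fun A hA hAF => (hagree A hA hAF).symm)
      ((measure_Iio_le_of_setLIntegral_Ico_le hδ hsuppν hνδ hνmom).trans hhalves)⟩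

/-- if two finite measures on [0,∞) agree on Borel subsets of
[F,∞), each has mass ≤ ε/2 on [0,δ], and each has first moment ≤ δε/2 on
[0,F), then their Prohorov distance is at most ε (i.e. for every ε' > ε the
Prohorov condition at level ε' holds for all closed sets). -/
theorem stmt15 (μ ν : Measure ℝ) [IsFiniteMeasure μ] [IsFiniteMeasure ν]
    (F δ ε : ℝ) (hF : 0 ≤ F) (hδ : 0 < δ) (hε : 0 < ε)
    (hsuppμ : μ (Set.Iio 0) = 0) (hsuppν : ν (Set.Iio 0) = 0)
    (hagree : ∀ A : Set ℝ, MeasurableSet A → A ⊆ Set.Ici F → μ A = ν A)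
    (hμδ : μ (Set.Icc 0 δ) ≤ ENNReal.ofReal (ε / 2))
    (hνδ : ν (Set.Icc 0 δ) ≤ ENNReal.ofReal (ε / 2))
    (hμmom : (∫⁻ x in Set.Ico 0 F, ENNReal.ofReal x ∂μ)
      ≤ ENNReal.ofReal (δ * ε / 2))
    (hνmom : (∫⁻ x in Set.Ico 0 F, ENNReal.ofReal x ∂ν)
      ≤ ENNReal.ofReal (δ * ε / 2)) :
    ∀ ε' > ε, ∀ B : Set ℝ, IsClosed B →
      μ B ≤ ν (Metric.thickening ε' B) + ENNReal.ofReal ε' ∧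
      ν B ≤ μ (Metric.thickening ε' B) + ENNReal.ofReal ε' :=
  stmt15_general μ ν F δ ε hδ hε hsuppμ hsuppν hagree hμδ hνδ hμmom hνmom
end

section
/- In the coupled SJF/SRPT systems at a common frontier start time τ with common previous frontier value, if a job j satisfies w_j ≥ F_p(τ) where F_p(τ) > F(τ) would hold, then w_j(τ) = w_j and v_j(τ) = w_j; consequently ⟨χ 1_{[F_p(τ),∞)}, Z(τ)⟩ = ⟨χ 1_{[F_p(τ),∞)}, Z_p(τ)⟩, and combining with the above-frontier workload identities forces ⟨χ 1_{[F(τ),F_p(τ))}, Z(τ)⟩ = 0, contradicting the presence of a frontier job of size F(τ); hence F(τ) = F_p(τ). -/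
/-!
If `F τ < Fp τ`, every job with `v j τ ≥ Fp τ` has size above `F τ`, so SJF has not touched it;
hence the SRPT workload above `Fp τ` is at most the SJF workload above `Fp τ`. The SJF frontier job
of size `F τ > 0` lies strictly between the two thresholds, so the SJF workload above `F τ`
exceeds the one above `Fp τ` by at least `F τ`. Both workloads above the frontiers equal `W τ`,
which is a contradiction; the other strict inequality is symmetric.
-/

open Finset

namespace Frontier

variable {ι : Type*}

/-- The paper's `⟨χ 1_{[x,∞)}, Z⟩`, for the state `Z` with residual job sizes `a`. -/
noncomputable def aboveWorkload (s : Finset ι) (a : ι → ℝ) (x : ℝ) : ℝ :=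
  ∑ j ∈ s, if x ≤ a j then a j else 0

variable {s : Finset ι} {a b w : ι → ℝ} {x y : ℝ}

theorem aboveWorkload_add_le (ha : ∀ j ∈ s, 0 ≤ a j) {j₀ : ι} (hj₀ : j₀ ∈ s)
    (hx : x ≤ a j₀) (hy : a j₀ < y) :
    aboveWorkload s a y + a j₀ ≤ aboveWorkload s a x := by
  have hband : ∀ j ∈ s,
      0 ≤ (if x ≤ a j then a j else 0) - (if y ≤ a j then a j else 0) := by
    intro j hj
    have := ha j hj
    split_ifs <;> linarith
  have := single_le_sum hband hj₀
  rw [if_pos hx, if_neg hy.not_ge, sub_zero, sum_sub_distrib] at this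
  unfold aboveWorkload
  linarith

theorem aboveWorkload_le_of_untouched (hxy : x < y) (hb : ∀ j ∈ s, b j ≤ w j)
    (ha : ∀ j ∈ s, x < w j → a j = w j) (ha₀ : ∀ j ∈ s, 0 ≤ a j) :
    aboveWorkload s b y ≤ aboveWorkload s a y := by
  refine sum_le_sum fun j hj => ?_
  by_cases hby : y ≤ b j
  · have hwj : a j = w j := ha j hj (by linarith [hb j hj])
    rw [if_pos hby, if_pos (by linarith [hb j hj])]
    linarith [hb j hj]
  · rw [if_neg hby]
    split_ifs <;> linarith [ha₀ j hj]

theorem le_of_aboveWorkload_eq (ha₀ : ∀ j ∈ s, 0 ≤ a j) (hb : ∀ j ∈ s, b j ≤ w j)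
    (ha : ∀ j ∈ s, x < w j → a j = w j) (heq : aboveWorkload s a x = aboveWorkload s b y)
    {j₀ : ι} (hj₀ : j₀ ∈ s) (haj₀ : a j₀ = x) (hx : 0 < x) :
    y ≤ x := by
  by_contra! hxy
  have hband := aboveWorkload_add_le ha₀ hj₀ haj₀.ge (haj₀ ▸ hxy)
  have htop := aboveWorkload_le_of_untouched hxy hb ha ha₀
  linarith

end Frontier

open Frontier in
theorem stmt18_general {ι : Type*}
    (arrived : ℝ → Finset ι) (w : ι → ℝ)
    (wres v : ι → ℝ → ℝ) (F Fp W : ℝ → ℝ) (τ : ℝ)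
    (huntouchedZ : ∀ j ∈ arrived τ, F τ < w j → wres j τ = w j)
    (huntouchedZp : ∀ j ∈ arrived τ, Fp τ < w j → v j τ = w j)
    (hmonoZ : ∀ j ∈ arrived τ, wres j τ ≤ w j)
    (hmonoZp : ∀ j ∈ arrived τ, v j τ ≤ w j)
    (habove : (∑ j ∈ arrived τ, if F τ ≤ wres j τ then wres j τ else 0) = W τ)
    (habovep : (∑ j ∈ arrived τ, if Fp τ ≤ v j τ then v j τ else 0) = W τ)
    (hfrontjob : ∃ j ∈ arrived τ, w j = F τ ∧ wres j τ = w j ∧ 0 < w j)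
    (hfrontjobp : ∃ j ∈ arrived τ, w j = Fp τ ∧ v j τ = w j ∧ 0 < w j)
    (hnonneg : ∀ j ∈ arrived τ, 0 ≤ wres j τ ∧ 0 ≤ v j τ) :
    F τ = Fp τ := by
  have heq : aboveWorkload (arrived τ) (wres · τ) (F τ)
      = aboveWorkload (arrived τ) (v · τ) (Fp τ) := habove.trans habovep.symm
  obtain ⟨j, hj, hwj, hresj, hposj⟩ := hfrontjob
  obtain ⟨k, hk, hwk, hvk, hposk⟩ := hfrontjobp
  have hFp_le : Fp τ ≤ F τ :=
    le_of_aboveWorkload_eq (fun i hi => (hnonneg i hi).1) hmonoZp huntouchedZ heq hj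
      (hresj.trans hwj) (hwj ▸ hposj)
  have hF_le : F τ ≤ Fp τ :=
    le_of_aboveWorkload_eq (fun i hi => (hnonneg i hi).2) hmonoZ huntouchedZp heq.symm hk
      (hvk.trans hwk) (hwk ▸ hposk)
  exact le_antisymm hF_le hFp_le

/-- final step of Lemma 3.5: at a common frontier start time τ,
jobs of size ≥ F_p(τ) are untouched under both policies, so the above-F_p(τ)
workloads of Z and Z_p agree; combined with the above-frontier workload
identities (both equal to W(τ)) and the presence of frontier jobs of sizes
F(τ) and F_p(τ), this forces F(τ) = F_p(τ). -/
theorem stmt18 {ι : Type*} [DecidableEq ι]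
    (arrived : ℝ → Finset ι) (w : ι → ℝ)
    (wres v : ι → ℝ → ℝ) (F Fp W : ℝ → ℝ) (τ : ℝ)
    (huntouchedZ : ∀ j ∈ arrived τ, F τ < w j → wres j τ = w j)
    (huntouchedZp : ∀ j ∈ arrived τ, Fp τ < w j → v j τ = w j)
    (hmonoZ : ∀ j ∈ arrived τ, wres j τ ≤ w j)
    (hmonoZp : ∀ j ∈ arrived τ, v j τ ≤ w j)
    (habove : (∑ j ∈ arrived τ, if F τ ≤ wres j τ then wres j τ else 0) = W τ)
    (habovep : (∑ j ∈ arrived τ, if Fp τ ≤ v j τ then v j τ else 0) = W τ)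
    (hfrontjob : ∃ j ∈ arrived τ, w j = F τ ∧ wres j τ = w j ∧ 0 < w j)
    (hfrontjobp : ∃ j ∈ arrived τ, w j = Fp τ ∧ v j τ = w j ∧ 0 < w j)
    (hnonneg : ∀ j ∈ arrived τ, 0 ≤ wres j τ ∧ 0 ≤ v j τ) :
    F τ = Fp τ :=
  stmt18_general arrived w wres v F Fp W τ huntouchedZ huntouchedZp hmonoZ hmonoZp habove habovep
    hfrontjob hfrontjobp hnonneg
end
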